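/- Fix an integer c ≥ 2, and for m ≥ 1 let a_c(m) denote the number of kinked signatures of length m with kink at position c. Then for all m ≥ 3: if m = c then a_c(m) = 3·a_c(m−1), and if m ≠ c then a_c(m) = 2·a_c(m−1) + a_c(m−2). -/

import Mathlib

open scoped Classical

/-- The three-letter alphabet {uncovered, covered, occupied}. -/
inductive VState : Type
  | unc | cov | occ
  deriving DecidableEq

instance : Fintype VState :=
  Fintype.ofList [VState.unc, VState.cov, VState.occ] (by intro x; cases x <;> simp)


/-- A kinked signature of length `m` with kink at (1-based) position `c`: the usual
adjacency constraint of signatures (no adjacent (unc, occ) or (occ, unc) pair) is imposed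
at every adjacent pair of positions except between positions `c−1` and `c`
(in 0-based indices, except at the pair `(c−2, c−1)`). -/
def IsKinkedSig (c : ℕ) {m : ℕ} (σ : Fin m → VState) : Prop :=
  ∀ i : Fin m, ∀ h : (i : ℕ) + 1 < m, (i : ℕ) ≠ c - 2 →
    ¬(σ i = VState.unc ∧ σ ⟨(i : ℕ) + 1, h⟩ = VState.occ) ∧
    ¬(σ i = VState.occ ∧ σ ⟨(i : ℕ) + 1, h⟩ = VState.unc)

/-- `a_c(m)`: the number of kinked signatures of length `m` with kink at position `c`. -/
noncomputable def numKinkedSig (c m : ℕ) : ℕ :=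
  Fintype.card {σ : Fin m → VState // IsKinkedSig c σ}

/-!
Remove the last letter. A kinked signature of length `n + 2` is a kinked signature `τ` of length
`n + 1` followed by a letter compatible with the last letter of `τ`, where across the kink every
letter is allowed; this gives the factor `3` at `m = c`. Away from the kink, `cov` can be followed
by all three letters and `unc`, `occ` by two each, so `a(n + 2) = 2 a(n + 1) + N`, where `N`
counts the signatures of length `n + 1` ending in `cov`. Since `cov` may follow anything, these
are exactly the extensions by `cov` of the signatures of length `n`, so `N = a(n)`.
-/

open Finset

theorem Nat.card_subtype_snoc {α : Type*} [Fintype α] {n : ℕ}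
    {P : (Fin (n + 1) → α) → Prop} {Q : (Fin n → α) → Prop} {R : (Fin n → α) → α → Prop}
    (h : ∀ τ s, P (Fin.snoc τ s) ↔ Q τ ∧ R τ s) :
    Nat.card {σ // P σ} = ∑ τ with Q τ, Nat.card {s // R τ s} := by
  simp only [Nat.card_eq_fintype_card, Fintype.card_subtype, card_filter, sum_filter]
  rw [← (Fin.snocEquiv fun _ => α).sum_comp, Fintype.sum_prod_type_right]
  refine Fintype.sum_congr _ _ fun τ => ?_
  simp [Fin.snocEquiv, h, ite_and]

namespace VState

theorem natCard_eq_three : Nat.card VState = 3 := by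
  rw [Nat.card_eq_fintype_card]
  rfl

def Compatible (t s : VState) : Prop := ¬(t = unc ∧ s = occ) ∧ ¬(t = occ ∧ s = unc)

theorem compatible_cov (t : VState) : Compatible t cov := by simp [Compatible]

theorem card_compatible (t : VState) :
    Nat.card {s // Compatible t s} = 2 + if t = cov then 1 else 0 := by
  cases t <;> simp [Nat.card_eq_fintype_card, Fintype.card_subtype, Compatible] <;> decide

end VState

open VState

variable {c n : ℕ}

theorem isKinkedSig_iff {σ : Fin (n + 1) → VState} :
    IsKinkedSig c σ ↔ ∀ i : Fin n, (i : ℕ) ≠ c - 2 → (σ i.castSucc).Compatible (σ i.succ) :=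
  ⟨fun h i => h i.castSucc (Nat.succ_lt_succ i.isLt), fun h i hi => h ⟨i, by omega⟩⟩

theorem isKinkedSig_snoc_iff {τ : Fin (n + 1) → VState} {s : VState} :
    IsKinkedSig c (Fin.snoc τ s) ↔
      IsKinkedSig c τ ∧ (n ≠ c - 2 → (τ (Fin.last n)).Compatible s) := by
  rw [isKinkedSig_iff, isKinkedSig_iff, Fin.forall_fin_succ']
  simp only [Fin.succ_castSucc, Fin.snoc_castSucc, Fin.succ_last, Fin.snoc_last, Fin.val_castSucc,
    Fin.val_last]

theorem numKinkedSig_eq_card_filter (c n : ℕ) :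
    numKinkedSig c n = #{σ : Fin n → VState | IsKinkedSig c σ} :=
  Fintype.card_subtype _

theorem numKinkedSig_add_two (c n : ℕ) :
    numKinkedSig c (n + 2) =
      ∑ τ with IsKinkedSig c τ, Nat.card {s // n ≠ c - 2 → (τ (Fin.last n)).Compatible s} := by
  rw [numKinkedSig, ← Nat.card_eq_fintype_card,
    Nat.card_subtype_snoc fun _ _ => isKinkedSig_snoc_iff]

theorem numKinkedSig_add_two_of_eq (h : n = c - 2) :
    numKinkedSig c (n + 2) = 3 * numKinkedSig c (n + 1) := by
  simp only [numKinkedSig_add_two, h, ne_eq, not_true_eq_false, IsEmpty.forall_iff,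
    Nat.card_subtype_true, sum_const, smul_eq_mul, numKinkedSig_eq_card_filter]
  rw [natCard_eq_three, mul_comm]

theorem card_isKinkedSig_last_eq_cov (c n : ℕ) :
    Nat.card {σ : Fin (n + 2) → VState // IsKinkedSig c σ ∧ σ (Fin.last (n + 1)) = cov} =
      numKinkedSig c (n + 1) := by
  have h_one (τ : Fin (n + 1) → VState) :
      Nat.card {s // (n ≠ c - 2 → (τ (Fin.last n)).Compatible s) ∧ s = cov} = 1 :=
    Nat.card_eq_one_iff_exists.2
      ⟨⟨cov, fun _ => compatible_cov _, rfl⟩, fun s => Subtype.ext s.2.2⟩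
  rw [Nat.card_subtype_snoc fun _ _ => by rw [isKinkedSig_snoc_iff, Fin.snoc_last, and_assoc],
    sum_congr rfl fun τ _ => h_one τ, sum_const, smul_eq_mul, mul_one, numKinkedSig_eq_card_filter]

theorem numKinkedSig_add_three_of_ne (h : n + 1 ≠ c - 2) :
    numKinkedSig c (n + 3) = 2 * numKinkedSig c (n + 2) + numKinkedSig c (n + 1) := by
  rw [numKinkedSig_add_two, ← card_isKinkedSig_last_eq_cov c n]
  simp only [h, ne_eq, not_false_eq_true, forall_const, card_compatible, sum_add_distrib, sum_const,
    smul_eq_mul, sum_boole, filter_filter, Nat.cast_id]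
  rw [numKinkedSig_eq_card_filter, Nat.card_eq_fintype_card, Fintype.card_subtype, mul_comm]

theorem numKinkedSig_recurrence_general (c : ℕ) :
    ∀ m : ℕ, 3 ≤ m →
      (m = c → numKinkedSig c m = 3 * numKinkedSig c (m - 1)) ∧
      (m ≠ c → numKinkedSig c m = 2 * numKinkedSig c (m - 1) + numKinkedSig c (m - 2)) := by
  intro m hm
  obtain ⟨n, rfl⟩ : ∃ n, m = n + 3 := ⟨m - 3, by omega⟩
  exact ⟨fun h => numKinkedSig_add_two_of_eq (by omega),
    fun h => numKinkedSig_add_three_of_ne (by omega)⟩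

/-- Fix `c ≥ 2`. For all `m ≥ 3`: if `m = c` then `a_c(m) = 3·a_c(m−1)`, and if `m ≠ c`
then `a_c(m) = 2·a_c(m−1) + a_c(m−2)`. -/
theorem numKinkedSig_recurrence (c : ℕ) (hc : 2 ≤ c) :
    ∀ m : ℕ, 3 ≤ m →
      (m = c → numKinkedSig c m = 3 * numKinkedSig c (m - 1)) ∧
      (m ≠ c → numKinkedSig c m = 2 * numKinkedSig c (m - 1) + numKinkedSig c (m - 2)) :=
  numKinkedSig_recurrence_general c
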